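/- arXiv:math-ph/0509057 — 5 statements merged into one kernel-verified Lean document; each statement's English description precedes it below -/
import Mathlib

section
/- Let X be a complex Banach space and S, T commuting bounded linear operators on X. Then the Hausdorff distance between σ(S) and σ(T) is at most the spectral radius of S - T. -/
/-!
If `l ∈ σ(a)` is farther than `r(a - b)` from `σ(b)`, then `u = l - b` is invertible with
`r(u⁻¹) ≤ dist(l, σ(b))⁻¹`, so `l - a = u (1 - u⁻¹ (a - b))`, and since commuting elements have
submultiplicative spectral radius, `r(u⁻¹ (a - b)) < 1` makes `l - a` invertible, a contradiction.
Applying this with the roles of `S` and `T` exchanged bounds both halves of the Hausdorff distance.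
-/

open Filter ENNReal Metric

section Field

variable {𝕜 A : Type*} [NormedField 𝕜] [Ring A] [Algebra 𝕜 A]

theorem spectralRadius_neg (a : A) : spectralRadius 𝕜 (-a) = spectralRadius 𝕜 a := by
  rw [spectralRadius, ← spectrum.neg_eq, ← Set.image_neg_eq_neg, iSup_image]
  simp only [nnnorm_neg, spectralRadius]

theorem spectralRadius_units_inv_le_inv_infEDist {a : A} {l : 𝕜} (u : Aˣ)
    (hu : (u : A) = algebraMap 𝕜 A l - a) :
    spectralRadius 𝕜 (↑u⁻¹ : A) ≤ (infEDist l (spectrum 𝕜 a))⁻¹ := by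
  refine iSup₂_le fun ν hν => ?_
  rw [← spectrum.map_inv, Set.mem_inv, hu, ← spectrum.singleton_sub_eq, Set.singleton_sub] at hν
  obtain ⟨μ, hμ, hlμ : l - μ = ν⁻¹⟩ := hν
  calc (‖ν‖₊ : ℝ≥0∞) = ↑‖l - μ‖₊⁻¹ := by rw [← nnnorm_inv, hlμ, inv_inv]
    _ ≤ (‖l - μ‖₊ : ℝ≥0∞)⁻¹ := ENNReal.coe_inv_le
    _ ≤ (infEDist l (spectrum 𝕜 a))⁻¹ :=
      ENNReal.inv_le_inv.mpr <| (infEDist_le_edist_of_mem hμ).trans_eq (edist_eq_enorm_sub l μ)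

end Field

section Complex

variable {A : Type*} [NormedRing A] [NormedAlgebra ℂ A] [CompleteSpace A]

/-- A consequence of Gelfand's formula `r(a) = lim ‖aⁿ‖^(1/n)` and `(ab)ⁿ = aⁿbⁿ`. -/
theorem Commute.spectralRadius_mul_le {a b : A} (h : Commute a b) :
    spectralRadius ℂ (a * b) ≤ spectralRadius ℂ a * spectralRadius ℂ b := by
  have hfin : ∀ c : A, spectralRadius ℂ c ≠ ∞ := fun c =>
    ((spectrum.spectralRadius_le_pow_nnnorm_pow_one_div ℂ c 0).trans_lt
      (ENNReal.mul_lt_top (by simp) (by simp))).ne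
  have hlim := ENNReal.Tendsto.mul (spectrum.pow_nnnorm_pow_one_div_tendsto_nhds_spectralRadius a)
    (Or.inr (hfin b)) (spectrum.pow_nnnorm_pow_one_div_tendsto_nhds_spectralRadius b)
    (Or.inr (hfin a))
  have hpow : ∀ n : ℕ, (‖(a * b) ^ n‖₊ : ℝ≥0∞) ^ (1 / n : ℝ) ≤
      (‖a ^ n‖₊ : ℝ≥0∞) ^ (1 / n : ℝ) * (‖b ^ n‖₊ : ℝ≥0∞) ^ (1 / n : ℝ) := fun n => by
    rw [h.mul_pow, ← ENNReal.mul_rpow_of_nonneg _ _ (by positivity)]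
    gcongr
    exact_mod_cast nnnorm_mul_le _ _
  calc spectralRadius ℂ (a * b)
      ≤ atTop.liminf fun n : ℕ => (‖(a * b) ^ n‖₊ : ℝ≥0∞) ^ (1 / n : ℝ) :=
        spectrum.spectralRadius_le_liminf_pow_nnnorm_pow_one_div ℂ (a * b)
    _ ≤ atTop.liminf fun n : ℕ =>
          (‖a ^ n‖₊ : ℝ≥0∞) ^ (1 / n : ℝ) * (‖b ^ n‖₊ : ℝ≥0∞) ^ (1 / n : ℝ) :=
        liminf_le_liminf (Eventually.of_forall hpow)
    _ = spectralRadius ℂ a * spectralRadius ℂ b := hlim.liminf_eq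

theorem infEDist_spectrum_le_spectralRadius_sub {a b : A} (hab : Commute a b) {l : ℂ}
    (hl : l ∈ spectrum ℂ a) :
    infEDist l (spectrum ℂ b) ≤ spectralRadius ℂ (a - b) := by
  by_contra! hlt
  have hlb : l ∉ spectrum ℂ b := fun h => by simp [infEDist_zero_of_mem h] at hlt
  obtain ⟨u, hu⟩ := spectrum.notMem_iff.mp hlb
  have hcomm : Commute (↑u⁻¹ : A) (a - b) := by
    refine Commute.units_inv_left ?_
    rw [hu]
    exact (Algebra.commute_algebraMap_left l (a - b)).sub_left (hab.symm.sub_right (Commute.refl b))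
  have hsmall : spectralRadius ℂ (↑u⁻¹ * (a - b)) < 1 :=
    calc spectralRadius ℂ (↑u⁻¹ * (a - b))
        ≤ spectralRadius ℂ (↑u⁻¹ : A) * spectralRadius ℂ (a - b) := hcomm.spectralRadius_mul_le
      _ ≤ (infEDist l (spectrum ℂ b))⁻¹ * spectralRadius ℂ (a - b) := by
          gcongr
          exact spectralRadius_units_inv_le_inv_infEDist u hu
      _ < 1 := by
          rw [mul_comm, ← div_eq_mul_inv]
          exact ENNReal.div_lt_of_lt_mul (by rwa [one_mul])
  have hunit : IsUnit (1 - ↑u⁻¹ * (a - b)) := by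
    have := spectrum.mem_resolventSet_of_spectralRadius_lt (k := (1 : ℂ)) (by simpa using hsmall)
    rwa [spectrum.mem_resolventSet_iff, map_one] at this
  have hfactor : algebraMap ℂ A l - a = u * (1 - ↑u⁻¹ * (a - b)) := by
    rw [mul_sub, mul_one, u.mul_inv_cancel_left, hu]
    abel
  exact spectrum.mem_iff.mp hl (hfactor ▸ u.isUnit.mul hunit)

end Complex

/-- For commuting bounded operators `S, T` on a complex Banach space, the Hausdorff
distance between their spectra is at most the spectral radius of `S - T`. -/
theorem hausdorffDist_spectrum_le_spectralRadius
    {X : Type*} [NormedAddCommGroup X] [NormedSpace ℂ X] [CompleteSpace X]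
    (S T : X →L[ℂ] X) (hST : S.comp T = T.comp S) :
    EMetric.hausdorffEdist (spectrum ℂ S) (spectrum ℂ T)
      ≤ spectralRadius ℂ (S - T) := by
  have hc : Commute S T := hST
  refine hausdorffEDist_le_of_infEDist (fun l hl => infEDist_spectrum_le_spectralRadius_sub hc hl)
    fun l hl => ?_
  simpa only [← neg_sub S T, spectralRadius_neg] using
    infEDist_spectrum_le_spectralRadius_sub hc.symm hl
end

section
/- Let X be a complex Banach space, (X_n)_{n≥0} a sequence of nonzero complemented subspaces with X_n ∩ X_m = {0} for n ≠ m, with projections π_n, and set P_n = π_0 ⊕ ⋯ ⊕ π_n. Let T be a bounded operator on X commuting with each P_n, and set T_n = T ∘ P_n and S_n = T restricted to X_n. If ‖T - T_n‖ → 0, then σ(T) equals the closure of the union over n of σ(S_n). -/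
/-!
`T` commutes with every `π j = P j - P (j - 1)`. Call `a` invertible on the corner of an idempotent
`p` if `a * r = p = r * a` for some `r`; then `z - T` is invertible on the corner of `π j` exactly
when `z ∉ σ(Sn j)`, and this already gives `σ(Sn j) ⊆ σ(T)`.

Conversely, let `z` lie off the closure `K` of the union. As `P n` kills `Xn (n + 1)`, we get
`‖Sn (n + 1)‖ ≤ ‖T - Tn n‖ → 0`; the spectra are nonempty, so `0 ∈ K` and `z ≠ 0`. Choose `n` with
`‖T (1 - P n)‖ < ‖z‖`. Then `z - T` is invertible on the corners of `π 0, …, π n`, hence on that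
of `P n`, and on the corner of `1 - P n`, where it agrees with `z - T (1 - P n)`. The corner
inverses add up to an inverse of `z - T`.
-/

open ContinuousLinearMap

section CornerInverse

variable {A : Type*} [Ring A]

theorem isUnit_of_exists_mul_eq_of_exists_mul_eq_one_sub {a p : A}
    (hp : ∃ r, a * r = p ∧ r * a = p) (hq : ∃ s, a * s = 1 - p ∧ s * a = 1 - p) : IsUnit a := by
  obtain ⟨r, har, hra⟩ := hp
  obtain ⟨s, has, hsa⟩ := hq
  exact isUnit_iff_exists.2
    ⟨r + s, by rw [mul_add, har, has, add_sub_cancel], by rw [add_mul, hra, hsa, add_sub_cancel]⟩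

theorem exists_mul_eq_sum_of_forall_exists_mul_eq {ι : Type*} {a : A} {e : ι → A} {s : Finset ι}
    (h : ∀ i ∈ s, ∃ r, a * r = e i ∧ r * a = e i) :
    ∃ r, a * r = ∑ i ∈ s, e i ∧ r * a = ∑ i ∈ s, e i := by
  choose! r har hra using h
  exact ⟨∑ i ∈ s, r i, by rw [Finset.mul_sum]; exact Finset.sum_congr rfl har,
    by rw [Finset.sum_mul]; exact Finset.sum_congr rfl hra⟩

theorem IsUnit.exists_mul_eq_of_commute {a p : A} (ha : IsUnit a) (hpa : Commute p a) :
    ∃ r, a * r = p ∧ r * a = p :=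
  ⟨↑ha.unit⁻¹ * p, by rw [← mul_assoc, ha.mul_val_inv, one_mul],
    by rw [mul_assoc, hpa.eq, ← mul_assoc, ha.val_inv_mul, one_mul]⟩

theorem exists_mul_eq_of_mem_resolventSet_mul {R : Type*} [CommRing R] [Algebra R A] {z : R}
    {a q : A} (hq : IsIdempotentElem q) (hqa : Commute q a) (hz : z ∈ resolventSet R (a * q)) :
    ∃ r, (algebraMap R A z - a) * r = q ∧ r * (algebraMap R A z - a) = q := by
  set u := algebraMap R A z - a * q
  have hu : IsUnit u := spectrum.mem_resolventSet_iff.1 hz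
  have hqu : Commute q u :=
    (Algebra.commute_algebraMap_right z q).sub_right (hqa.mul_right (Commute.refl q))
  have hqw : Commute q ↑hu.unit⁻¹ := by
    rw [← hu.unit_spec] at hqu
    exact hqu.units_inv_right
  have hLq : (algebraMap R A z - a) * q = u * q := by rw [sub_mul, sub_mul, mul_assoc, hq.eq]
  have hqL : q * (algebraMap R A z - a) = u * q := by
    rw [← hLq, ((Algebra.commute_algebraMap_right z q).sub_right hqa).eq]
  refine ⟨q * ↑hu.unit⁻¹, ?_, ?_⟩
  · rw [← mul_assoc, hLq, mul_assoc, hqw.eq, ← mul_assoc, hu.mul_val_inv, one_mul]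
  · rw [hqw.eq, mul_assoc, hqL, ← mul_assoc, hu.val_inv_mul, one_mul]

end CornerInverse

section Restriction

variable {𝕜 X : Type*} [NormedField 𝕜] [NormedAddCommGroup X] [NormedSpace 𝕜 X]
  {p T : X →L[𝕜] X} {M : Submodule 𝕜 X} {S : M →L[𝕜] M}

theorem notMem_spectrum_restrict_iff (hp : IsIdempotentElem p) (hpT : Commute p T)
    (hM : M = LinearMap.range (p : X →ₗ[𝕜] X)) (hS : ∀ x : M, (S x : X) = T x) {z : 𝕜} :
    z ∉ spectrum 𝕜 S ↔
      ∃ r, (algebraMap 𝕜 _ z - T) * r = p ∧ r * (algebraMap 𝕜 _ z - T) = p := by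
  have hmem : ∀ x, x ∈ M ↔ p x = x := fun x =>
    hM ▸ LinearMap.IsIdempotentElem.mem_range_iff hp.toLinearMap
  have hpM : ∀ x, p x ∈ M := fun x => (hmem _).2 (by rw [← mul_apply_eq_comp p p, hp.eq])
  have hres : ∀ y : M, ((algebraMap 𝕜 _ z - S) y : X) = (algebraMap 𝕜 _ z - T) y := fun y => by
    simp [hS]
  have hpL : Commute p (algebraMap 𝕜 _ z - T) :=
    (Algebra.commute_algebraMap_right z p).sub_right hpT
  rw [spectrum.notMem_iff, isUnit_iff_exists]
  constructor
  · rintro ⟨v, hv, hvS⟩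
    refine ⟨M.subtypeL ∘L v ∘L p.codRestrict M hpM, ?_, ?_⟩
    · ext x
      simpa [← hres] using congr(($hv (p.codRestrict M hpM x) : X))
    · ext x
      have : p.codRestrict M hpM ((algebraMap 𝕜 _ z - T) x) =
          (algebraMap 𝕜 _ z - S) (p.codRestrict M hpM x) := by
        ext1
        rw [hres, coe_codRestrict_apply, coe_codRestrict_apply, ← mul_apply_eq_comp, hpL.eq,
          mul_apply_eq_comp]
      rw [mul_apply_eq_comp, comp_apply, comp_apply, this, ← mul_apply_eq_comp v, hvS]
      rfl
  · rintro ⟨r, hr, hrT⟩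
    refine ⟨p.codRestrict M hpM ∘L r ∘L M.subtypeL, ?_, ?_⟩
    · ext x
      rw [mul_apply_eq_comp, hres, comp_apply, comp_apply, coe_codRestrict_apply,
        ← mul_apply_eq_comp, ← hpL.eq, mul_apply_eq_comp, Submodule.subtypeL_apply,
        ← mul_apply_eq_comp _ r, hr, ← mul_apply_eq_comp, hp.eq]
      exact (hmem x).1 x.2
    · ext x
      rw [mul_apply_eq_comp, comp_apply, comp_apply, coe_codRestrict_apply,
        Submodule.subtypeL_apply, hres, ← mul_apply_eq_comp r, hrT, ← mul_apply_eq_comp, hp.eq]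
      exact (hmem x).1 x.2

theorem spectrum_restrict_subset (hp : IsIdempotentElem p) (hpT : Commute p T)
    (hM : M = LinearMap.range (p : X →ₗ[𝕜] X)) (hS : ∀ x : M, (S x : X) = T x) :
    spectrum 𝕜 S ⊆ spectrum 𝕜 T := by
  intro z hzS
  by_contra hzT
  exact (notMem_spectrum_restrict_iff hp hpT hM hS).2
    ((spectrum.notMem_iff.1 hzT).exists_mul_eq_of_commute
      ((Algebra.commute_algebraMap_right z p).sub_right hpT)) hzS

end Restriction

section PartialSums

variable {A : Type*} [Ring A] {π P : ℕ → A}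

theorem commute_of_forall_commute_partialSums
    (hP : ∀ n, P n = ∑ j ∈ Finset.range (n + 1), π j) {a : A} (h : ∀ n, Commute (P n) a) (j : ℕ) :
    Commute (π j) a := by
  cases j with
  | zero => simpa [hP] using h 0
  | succ j =>
    have hπ : π (j + 1) = P (j + 1) - P j := by
      rw [hP, hP, Finset.sum_range_succ _ (j + 1), add_sub_cancel_left]
    exact hπ ▸ (h (j + 1)).sub_left (h j)

theorem mul_eq_zero_of_isIdempotentElem_partialSums [IsAddTorsionFree A]
    (hP : ∀ n, P n = ∑ j ∈ Finset.range (n + 1), π j) (hπ : ∀ j, IsIdempotentElem (π j))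
    (hPi : ∀ n, IsIdempotentElem (P n)) (n : ℕ) : P n * π (n + 1) = 0 := by
  have hsucc : P (n + 1) = P n + π (n + 1) := by rw [hP, hP, Finset.sum_range_succ _ (n + 1)]
  exact (hPi n).mul_eq_zero_of_anticommute (((hPi n).add_iff (hπ _)).1 (hsucc ▸ hPi (n + 1)))

end PartialSums

section Norm

variable {𝕜 X : Type*} [NontriviallyNormedField 𝕜] [NormedAddCommGroup X] [NormedSpace 𝕜 X]
  {P T : X →L[𝕜] X} {M : Submodule 𝕜 X} {S : M →L[𝕜] M}

theorem norm_restrict_le_norm_sub_mul (hMP : M ≤ LinearMap.ker (P : X →ₗ[𝕜] X))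
    (hS : ∀ x : M, (S x : X) = T x) : ‖S‖ ≤ ‖T - T * P‖ := by
  refine opNorm_le_bound _ (norm_nonneg _) fun x => ?_
  have hPx : P x = 0 := hMP x.2
  calc ‖S x‖ = ‖(T - T * P) x‖ := by
        rw [sub_apply, mul_apply_eq_comp, hPx, map_zero, sub_zero, ← hS]; rfl
    _ ≤ ‖T - T * P‖ * ‖x‖ := le_opNorm _ _

end Norm

theorem exists_mem_spectrum_norm_le {X : Type*} [NormedAddCommGroup X] [NormedSpace ℂ X]
    [CompleteSpace X] {M : Submodule ℂ X} (hM : IsClosed (M : Set X)) (hM₀ : M ≠ ⊥)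
    (S : M →L[ℂ] M) :
    ∃ μ ∈ spectrum ℂ S, ‖μ‖ ≤ ‖S‖ := by
  have : CompleteSpace M := hM.completeSpace_coe
  have : Nontrivial M := Submodule.nontrivial_iff_ne_bot.2 hM₀
  obtain ⟨μ, hμ⟩ := spectrum.nonempty S
  exact ⟨μ, hμ, spectrum.norm_le_norm_of_mem hμ⟩

theorem spectrum_eq_closure_iUnion_spectrum_restrictions_general
    {X : Type*} [NormedAddCommGroup X] [NormedSpace ℂ X] [CompleteSpace X]
    (T : X →L[ℂ] X)
    (π : ℕ → X →L[ℂ] X)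
    (hπ : ∀ n, (π n).comp (π n) = π n)
    (Xn : ℕ → Submodule ℂ X)
    (hXn : ∀ n, Xn n = LinearMap.range (π n : X →ₗ[ℂ] X))
    (hne : ∀ n, Xn n ≠ ⊥)
    (P : ℕ → X →L[ℂ] X)
    (hP : ∀ n, P n = ∑ j ∈ Finset.range (n + 1), π j)
    (hPproj : ∀ n, (P n).comp (P n) = P n)
    (hcomm : ∀ n, T.comp (P n) = (P n).comp T)
    (Tn : ℕ → X →L[ℂ] X)
    (hTn : ∀ n, Tn n = T.comp (P n))
    (hlim : Filter.Tendsto (fun n => ‖T - Tn n‖) Filter.atTop (nhds 0))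
    (Sn : ∀ n, ↥(Xn n) →L[ℂ] ↥(Xn n))
    (hSn : ∀ n (x : Xn n), ((Sn n x : X)) = T x) :
    spectrum ℂ T = closure (⋃ n : ℕ, spectrum ℂ (Sn n)) := by
  have hπi : ∀ j, IsIdempotentElem (π j) := hπ
  have hPi : ∀ n, IsIdempotentElem (P n) := hPproj
  have hTP : ∀ n, T - Tn n = T * (1 - P n) := fun n => by rw [hTn, mul_sub, mul_one]; rfl
  have hπT : ∀ j, Commute (π j) T :=
    commute_of_forall_commute_partialSums hP fun n => (hcomm n).symm
  have : IsAddTorsionFree (X →L[ℂ] X) := .of_isTorsionFree ℂ _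
  refine subset_antisymm (fun z hzT => ?_) (closure_minimal (Set.iUnion_subset fun j =>
    spectrum_restrict_subset (hπi j) (hπT j) (hXn j) (hSn j)) (spectrum.isClosed T))
  by_contra hz
  have h0 : (0 : ℂ) ∈ closure (⋃ n, spectrum ℂ (Sn n)) := by
    refine Metric.mem_closure_iff.2 fun ε hε => ?_
    obtain ⟨n, hn⟩ := (hlim.eventually (gt_mem_nhds hε)).exists
    have hker : Xn (n + 1) ≤ LinearMap.ker (P n : X →ₗ[ℂ] X) := by
      rw [hXn, LinearMap.range_le_ker_iff]
      exact congr(($(mul_eq_zero_of_isIdempotentElem_partialSums hP hπi hPi n) : X →ₗ[ℂ] X))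
    obtain ⟨μ, hμ, hμS⟩ := exists_mem_spectrum_norm_le
      (hXn (n + 1) ▸ (hπi (n + 1)).isClosed_range) (hne (n + 1)) (Sn (n + 1))
    refine ⟨μ, Set.mem_iUnion.2 ⟨n + 1, hμ⟩, ?_⟩
    calc dist 0 μ = ‖μ‖ := dist_zero_left μ
      _ ≤ ‖T - T * P n‖ := hμS.trans (norm_restrict_le_norm_sub_mul hker (hSn (n + 1)))
      _ < ε := by rwa [hTn] at hn
  obtain ⟨n, hn⟩ :=
    (hlim.eventually (gt_mem_nhds (norm_pos_iff.2 fun h : z = 0 => hz (h ▸ h0)))).exists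
  have hhead := exists_mul_eq_sum_of_forall_exists_mul_eq fun j (_ : j ∈ Finset.range (n + 1)) =>
    (notMem_spectrum_restrict_iff (hπi j) (hπT j) (hXn j) (hSn j)).1
      fun h => hz (subset_closure (Set.mem_iUnion.2 ⟨j, h⟩))
  have htail := exists_mul_eq_of_mem_resolventSet_mul (hPi n).one_sub
    ((Commute.one_left T).sub_left (hcomm n).symm) (spectrum.mem_resolventSet_of_norm_lt_mul
      ((mul_le_of_le_one_right (norm_nonneg _) norm_id_le).trans_lt (hTP n ▸ hn)))
  exact spectrum.mem_iff.1 hzT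
    (isUnit_of_exists_mul_eq_of_exists_mul_eq_one_sub (hP n ▸ hhead) htail)

/-- Direct sum decomposition of the spectrum.  Let `X` be a complex Banach space,
`(π n)` bounded projections with nonzero, pairwise trivially intersecting ranges
`Xn n`, such that `P n = π 0 + ⋯ + π n` are projections commuting with `T`.
Put `Tn n = T ∘ P n` and let `Sn n` be the restriction of `T` to `Xn n`.
If `‖T - Tn n‖ → 0`, then `σ(T)` is the closure of the union of the `σ(Sn n)`. -/
theorem spectrum_eq_closure_iUnion_spectrum_restrictions
    {X : Type*} [NormedAddCommGroup X] [NormedSpace ℂ X] [CompleteSpace X]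
    (T : X →L[ℂ] X)
    (π : ℕ → X →L[ℂ] X)
    (hπ : ∀ n, (π n).comp (π n) = π n)
    (Xn : ℕ → Submodule ℂ X)
    (hXn : ∀ n, Xn n = LinearMap.range (π n : X →ₗ[ℂ] X))
    (hne : ∀ n, Xn n ≠ ⊥)
    (hdisj : ∀ n m, n ≠ m → Xn n ⊓ Xn m = ⊥)
    (P : ℕ → X →L[ℂ] X)
    (hP : ∀ n, P n = ∑ j ∈ Finset.range (n + 1), π j)
    (hPproj : ∀ n, (P n).comp (P n) = P n)
    (hcomm : ∀ n, T.comp (P n) = (P n).comp T)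
    (Tn : ℕ → X →L[ℂ] X)
    (hTn : ∀ n, Tn n = T.comp (P n))
    (hlim : Filter.Tendsto (fun n => ‖T - Tn n‖) Filter.atTop (nhds 0))
    (Sn : ∀ n, ↥(Xn n) →L[ℂ] ↥(Xn n))
    (hSn : ∀ n (x : Xn n), ((Sn n x : X)) = T x) :
    spectrum ℂ T = closure (⋃ n : ℕ, spectrum ℂ (Sn n)) :=
  spectrum_eq_closure_iUnion_spectrum_restrictions_general T π hπ Xn hXn hne P hP hPproj hcomm Tn
    hTn hlim Sn hSn
end

section
/- Under the assumptions of the preceding direct-sum setting, if ‖T - T_n‖ → 0 then 0 belongs to the closure of the union of the spectra σ(S_n) of the restrictions S_n = T|_{X_n}. -/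
/-!
Pick `λₙ ∈ σ(Sₙ)`, possible because `Xₙ` is a nonzero Banach space. Since `π (n+1)` fixes
`X_{n+1}`, `‖λ_{n+1}‖ ≤ ‖S_{n+1}‖ ≤ ‖T ∘ π (n+1)‖ = ‖T_{n+1} - T_n‖`, and the right-hand side
tends to `0` because `T_n → T`. Hence `λ_{n+1} → 0`.
-/

open Filter Topology

theorem spectrum.exists_mem_norm_le {A : Type*} [NormedRing A] [NormedAlgebra ℂ A]
    [CompleteSpace A] [NormOneClass A] [Nontrivial A] (a : A) :
    ∃ z ∈ spectrum ℂ a, ‖z‖ ≤ ‖a‖ :=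
  let ⟨z, hz⟩ := spectrum.nonempty a
  ⟨z, hz, spectrum.norm_le_norm_of_mem hz⟩

namespace ContinuousLinearMap

variable {𝕜 E : Type*} [NontriviallyNormedField 𝕜] [NormedAddCommGroup E] [NormedSpace 𝕜 E]

theorem opNorm_le_opNorm_comp_of_restrict {V : Submodule 𝕜 E} {S : V →L[𝕜] V}
    {T p : E →L[𝕜] E} (hS : ∀ x : V, (S x : E) = T x) (hp : ∀ x ∈ V, p x = x) :
    ‖S‖ ≤ ‖T.comp p‖ :=
  opNorm_le_bound _ (norm_nonneg _) fun x => by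
    calc ‖S x‖ = ‖T (p x)‖ := by rw [hp x x.2, ← hS x]; rfl
      _ ≤ ‖T.comp p‖ * ‖x‖ := (T.comp p).le_opNorm (x : E)

end ContinuousLinearMap

theorem zero_mem_closure_iUnion_spectrum_restrictions_general
    {X : Type*} [NormedAddCommGroup X] [NormedSpace ℂ X] [CompleteSpace X]
    (T : X →L[ℂ] X)
    (π : ℕ → X →L[ℂ] X)
    (hπ : ∀ n, (π n).comp (π n) = π n)
    (Xn : ℕ → Submodule ℂ X)
    (hXn : ∀ n, Xn n = LinearMap.range (π n : X →ₗ[ℂ] X))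
    (hne : ∀ n, Xn n ≠ ⊥)
    (P : ℕ → X →L[ℂ] X)
    (hP : ∀ n, P n = ∑ j ∈ Finset.range (n + 1), π j)
    (Tn : ℕ → X →L[ℂ] X)
    (hTn : ∀ n, Tn n = T.comp (P n))
    (hlim : Filter.Tendsto (fun n => ‖T - Tn n‖) Filter.atTop (nhds 0))
    (Sn : ∀ n, ↥(Xn n) →L[ℂ] ↥(Xn n))
    (hSn : ∀ n (x : Xn n), ((Sn n x : X)) = T x) :
    (0 : ℂ) ∈ closure (⋃ n : ℕ, spectrum ℂ (Sn n)) := by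
  have hfix : ∀ n, ∀ x ∈ Xn n, π n x = x := fun n x hx =>
    (LinearMap.IsIdempotentElem.mem_range_iff (p := (π n : X →ₗ[ℂ] X))
      (congrArg ContinuousLinearMap.toLinearMap (hπ n))).1 (hXn n ▸ hx)
  have hspec : ∀ n, ∃ z ∈ spectrum ℂ (Sn n), ‖z‖ ≤ ‖Sn n‖ := fun n => by
    have : CompleteSpace (Xn n) :=
      (hXn n ▸ ContinuousLinearMap.IsIdempotentElem.isClosed_range (hπ n)).completeSpace_coe
    have : Nontrivial (Xn n) := Submodule.nontrivial_iff_ne_bot.mpr (hne n)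
    exact spectrum.exists_mem_norm_le (Sn n)
  choose lam hlam_mem hlam_le using hspec
  have hblock : ∀ n, T.comp (π (n + 1)) = Tn (n + 1) - Tn n := fun n => by
    rw [hTn, hTn, hP (n + 1), Finset.sum_range_succ, ← hP, ContinuousLinearMap.comp_add,
      add_sub_cancel_left]
  have hTn_tendsto : Tendsto Tn atTop (𝓝 T) :=
    tendsto_iff_norm_sub_tendsto_zero.2 (by simpa only [norm_sub_rev] using hlim)
  have hdiff : Tendsto (fun n => Tn (n + 1) - Tn n) atTop (𝓝 0) := by
    simpa only [sub_self, Function.comp_def] using (hTn_tendsto.comp (tendsto_add_atTop_nat 1)).sub hTn_tendsto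
  have hlam : Tendsto (fun n => lam (n + 1)) atTop (𝓝 0) :=
    squeeze_zero_norm (fun n => calc
        ‖lam (n + 1)‖ ≤ ‖Sn (n + 1)‖ := hlam_le _
        _ ≤ ‖T.comp (π (n + 1))‖ :=
          ContinuousLinearMap.opNorm_le_opNorm_comp_of_restrict (hSn _) (hfix _)
        _ = ‖Tn (n + 1) - Tn n‖ := by rw [hblock])
      (tendsto_zero_iff_norm_tendsto_zero.1 hdiff)
  exact mem_closure_of_tendsto hlam
    (Eventually.of_forall fun n => Set.mem_iUnion.2 ⟨n + 1, hlam_mem _⟩)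

/-- Direct sum decomposition of the spectrum.  Let `X` be a complex Banach space,
`(π n)` bounded projections with nonzero, pairwise trivially intersecting ranges
`Xn n`, such that `P n = π 0 + ⋯ + π n` are projections commuting with `T`.
Put `Tn n = T ∘ P n` and let `Sn n` be the restriction of `T` to `Xn n`.
If `‖T - Tn n‖ → 0`, then `σ(T)` is the closure of the union of the `σ(Sn n)`. -/
theorem zero_mem_closure_iUnion_spectrum_restrictions
    {X : Type*} [NormedAddCommGroup X] [NormedSpace ℂ X] [CompleteSpace X]
    (T : X →L[ℂ] X)
    (π : ℕ → X →L[ℂ] X)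
    (hπ : ∀ n, (π n).comp (π n) = π n)
    (Xn : ℕ → Submodule ℂ X)
    (hXn : ∀ n, Xn n = LinearMap.range (π n : X →ₗ[ℂ] X))
    (hne : ∀ n, Xn n ≠ ⊥)
    (hdisj : ∀ n m, n ≠ m → Xn n ⊓ Xn m = ⊥)
    (P : ℕ → X →L[ℂ] X)
    (hP : ∀ n, P n = ∑ j ∈ Finset.range (n + 1), π j)
    (hPproj : ∀ n, (P n).comp (P n) = P n)
    (hcomm : ∀ n, T.comp (P n) = (P n).comp T)
    (Tn : ℕ → X →L[ℂ] X)
    (hTn : ∀ n, Tn n = T.comp (P n))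
    (hlim : Filter.Tendsto (fun n => ‖T - Tn n‖) Filter.atTop (nhds 0))
    (Sn : ∀ n, ↥(Xn n) →L[ℂ] ↥(Xn n))
    (hSn : ∀ n (x : Xn n), ((Sn n x : X)) = T x) :
    (0 : ℂ) ∈ closure (⋃ n : ℕ, spectrum ℂ (Sn n)) :=
  zero_mem_closure_iUnion_spectrum_restrictions_general T π hπ Xn hXn hne P hP Tn hTn hlim Sn hSn
end

section
/- Let H and K be complex Hilbert spaces and S ∈ L(H), T ∈ L(K) bounded operators. Then the spectrum of S ⊗ T on the Hilbert tensor product H ⊗̂ K equals { η·ζ : η ∈ σ(S), ζ ∈ σ(T) }. -/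
/-!
Put `S₁ = S ⊗ 1` and `T₁ = 1 ⊗ T`. Then `S ⊗ T = S₁ T₁` with `S₁`, `T₁` commuting, and
`σ(S₁) ⊆ σ(S)`, `σ(T₁) ⊆ σ(T)` since `P ↦ P ⊗ 1` is a unital algebra homomorphism. Gelfand theory
in the bicommutant of `{S₁, T₁}`, a commutative Banach algebra with the same spectra, gives
`σ(S₁ T₁) ⊆ σ(S₁) σ(T₁)`.

Conversely, a point `η ∈ σ(S)` is an approximate eigenvalue of `S` or `conj η` is an eigenvalue
of `S*`. Either way, for any `C` commuting with `S₁` there is a unit vector `a` making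
`⟪C (η - S₁) (a ⊗ b), a ⊗ b⟫` small for all unit vectors `b`. If `ηζ - S₁ T₁` were invertible we
would have `C₁ (η - S₁) + C₂ (ζ - T₁) = 1` with such `C₁`, `C₂`, and evaluating at `a ⊗ b` would
give `1 < 1/2 + 1/2`.
-/

open scoped InnerProductSpace

/-- An abstract presentation of the Hilbert tensor product `H ⊗̂ K`: a Hilbert
space `HK` with a map `emb` sending `(x, y)` to the elementary tensor `x ⊗ y`,
such that `⟪x ⊗ y, x' ⊗ y'⟫ = ⟪x, x'⟫ ⟪y, y'⟫` and elementary tensors span a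
dense subspace. -/
structure TensorProdStructure (H K HK : Type*) [NormedAddCommGroup H]
    [InnerProductSpace ℂ H] [NormedAddCommGroup K] [InnerProductSpace ℂ K]
    [NormedAddCommGroup HK] [InnerProductSpace ℂ HK] where
  emb : H → K → HK
  inner_emb : ∀ (x x' : H) (y y' : K),
    ⟪emb x y, emb x' y'⟫_ℂ = ⟪x, x'⟫_ℂ * ⟪y, y'⟫_ℂ
  dense_span : Dense ((Submodule.span ℂ
    (Set.range fun p : H × K => emb p.1 p.2) : Submodule ℂ HK) : Set HK)

open scoped Pointwise

namespace ContinuousLinearMap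

variable {𝕜 E : Type*} [RCLike 𝕜] [NormedAddCommGroup E] [InnerProductSpace 𝕜 E]
  [CompleteSpace E]

theorem isUnit_of_le_norm_apply_of_ker_adjoint_eq_bot {A : E →L[𝕜] E}
    {c : NNReal} (hc : 0 < c) (hA : ∀ v, c * ‖v‖ ≤ ‖A v‖) (hker : (adjoint A).ker = ⊥) :
    IsUnit A := by
  have hanti : AntilipschitzWith c⁻¹ A := A.antilipschitz_of_bound fun v => by
    rw [NNReal.coe_inv, inv_mul_eq_div, le_div_iff₀' (by exact_mod_cast hc)]
    exact hA v
  have hclosed : IsClosed (A.range : Set E) := hanti.isClosed_range A.uniformContinuous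
  have hrange : A.range = ⊤ := by
    rw [← hclosed.submodule_topologicalClosure_eq, Submodule.topologicalClosure_eq_top_iff]
    exact A.orthogonal_range.trans hker
  exact A.isUnit_iff_bijective.mpr ⟨hanti.injective, LinearMap.range_eq_top.mp hrange⟩

theorem exists_norm_apply_lt_or_exists_adjoint_apply_eq_zero
    {A : E →L[𝕜] E} (hA : ¬IsUnit A) :
    (∀ ε > 0, ∃ v, ‖v‖ = 1 ∧ ‖A v‖ < ε) ∨ ∃ v, ‖v‖ = 1 ∧ adjoint A v = 0 := by
  by_contra! h
  obtain ⟨⟨ε, hε, hbound⟩, hker⟩ := h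
  refine hA <| isUnit_of_le_norm_apply_of_ker_adjoint_eq_bot (c := ⟨ε, hε.le⟩) hε
    (fun v => ?_) ?_
  · rcases eq_or_ne v 0 with rfl | hv
    · simp
    · have := hbound _ (norm_smul_inv_norm (𝕜 := 𝕜) hv)
      rw [map_smul, norm_smul, norm_inv, RCLike.norm_ofReal, abs_norm] at this
      exact mul_comm ‖v‖ ε ▸ (le_inv_mul_iff₀ (norm_pos_iff.mpr hv)).mp this
  · refine (Submodule.eq_bot_iff _).mpr fun v hv => ?_
    by_contra hv0
    refine hker _ (norm_smul_inv_norm (𝕜 := 𝕜) hv0) ?_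
    rw [map_smul, show adjoint A v = 0 from hv, smul_zero]

end ContinuousLinearMap

theorem Subalgebra.spectrum_centralizer_eq {R A : Type*} [CommRing R] [Ring A] [Algebra R A]
    {s : Set A} (x : Subalgebra.centralizer R s) :
    spectrum R x = spectrum R (x : A) := by
  refine subset_antisymm (fun r hr hunit => hr ?_) (spectrum.subset_subalgebra x)
  obtain ⟨u, hu⟩ := hunit
  have hu_mem : (u : A) ∈ Subalgebra.centralizer R s := hu ▸ sub_mem (algebraMap_mem _ r) x.2
  have hinv_mem : (↑u⁻¹ : A) ∈ Subalgebra.centralizer R s := fun y hy =>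
    (Commute.units_inv_right (hu_mem y hy)).eq
  exact ⟨⟨⟨u, hu_mem⟩, ⟨_, hinv_mem⟩, Subtype.ext u.mul_inv, Subtype.ext u.inv_mul⟩,
    Subtype.ext hu⟩

theorem spectrum_mul_subset_of_commute {A : Type*} [NormedRing A] [NormedAlgebra ℂ A]
    [CompleteSpace A] {a b : A} (hab : Commute a b) :
    spectrum ℂ (a * b) ⊆ spectrum ℂ a * spectrum ℂ b := by
  set B := Subalgebra.centralizer ℂ (Set.centralizer {a, b})
  have hcomm : ∀ x ∈ ({a, b} : Set A), ∀ y ∈ ({a, b} : Set A), x * y = y * x := by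
    simp only [Set.mem_insert_iff, Set.mem_singleton_iff]
    rintro _ (rfl | rfl) _ (rfl | rfl) <;> first | rfl | exact hab.eq | exact hab.symm.eq
  let _ : NormedCommRing B :=
    { (inferInstance : NormedRing B) with
      mul_comm x y := Subtype.ext <|
        Set.centralizer_centralizer_comm_of_comm hcomm _ x.2 _ y.2 }
  have : CompleteSpace B := (Set.isClosed_centralizer _).completeSpace_coe
  have ha : a ∈ B := Set.subset_centralizer_centralizer (by simp)
  have hb : b ∈ B := Set.subset_centralizer_centralizer (by simp)
  intro z hz
  rw [show a * b = ((⟨a, ha⟩ * ⟨b, hb⟩ : B) : A) from rfl,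
    ← Subalgebra.spectrum_centralizer_eq] at hz
  obtain ⟨f, hf⟩ := WeakDual.CharacterSpace.mem_spectrum_iff_exists.mp hz
  refine ⟨f ⟨a, ha⟩, ?_, f ⟨b, hb⟩, ?_, (map_mul f _ _).symm.trans hf⟩
  · exact Subalgebra.spectrum_centralizer_eq (R := ℂ) ⟨a, ha⟩ ▸ AlgHom.apply_mem_spectrum f _
  · exact Subalgebra.spectrum_centralizer_eq (R := ℂ) ⟨b, hb⟩ ▸ AlgHom.apply_mem_spectrum f _

theorem Commute.exists_mul_add_mul_eq_one {R A : Type*} [CommSemiring R] [Ring A] [Algebra R A]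
    {a b : A} (hab : Commute a b) {η ζ : R} (h : IsUnit (algebraMap R A (η * ζ) - a * b)) :
    ∃ c d : A, Commute c (algebraMap R A η - a) ∧ Commute d (algebraMap R A ζ - b) ∧
      c * (algebraMap R A η - a) + d * (algebraMap R A ζ - b) = 1 := by
  -- `ηζ - ab = b (η - a) + η (ζ - b)`, so `c = u⁻¹ b` and `d = u⁻¹ η` work.
  obtain ⟨u, hu⟩ := h
  have hua : Commute (u : A) a := hu ▸
    (Algebra.commute_algebraMap_left _ _).sub_left ((Commute.refl a).mul_left hab.symm)
  have hub : Commute (u : A) b := hu ▸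
    (Algebra.commute_algebraMap_left _ _).sub_left (hab.mul_left (Commute.refl b))
  refine ⟨↑u⁻¹ * b, ↑u⁻¹ * algebraMap R A η,
    (Algebra.commute_algebraMap_right η _).sub_right (hua.units_inv_left.mul_left hab.symm),
    (Algebra.commute_algebraMap_right ζ _).sub_right
      (hub.units_inv_left.mul_left (Algebra.commute_algebraMap_left η b)), ?_⟩
  have : b * (algebraMap R A η - a) + algebraMap R A η * (algebraMap R A ζ - b) = u := by
    rw [hu, map_mul, mul_sub, mul_sub, ← hab.eq, ← Algebra.commutes η b]
    abel
  rw [mul_assoc, mul_assoc, ← mul_add, this, Units.inv_mul]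

namespace TensorProdStructure

variable {H K HK : Type*}
    [NormedAddCommGroup H] [InnerProductSpace ℂ H]
    [NormedAddCommGroup K] [InnerProductSpace ℂ K]
    [NormedAddCommGroup HK] [InnerProductSpace ℂ HK]
    (tp : TensorProdStructure H K HK)

theorem ext_emb {E : Type*} [NormedAddCommGroup E] [NormedSpace ℂ E] {f g : HK →L[ℂ] E}
    (h : ∀ x y, f (tp.emb x y) = g (tp.emb x y)) : f = g :=
  ContinuousLinearMap.ext_on tp.dense_span (by rintro _ ⟨p, rfl⟩; exact h p.1 p.2)

theorem ext_inner_emb {u v : HK} (h : ∀ x y, ⟪u, tp.emb x y⟫_ℂ = ⟪v, tp.emb x y⟫_ℂ) : u = v :=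
  ext_inner_right ℂ fun w => congr($(tp.ext_emb (f := innerSL ℂ u) (g := innerSL ℂ v) h) w)

theorem emb_add_left (x x' : H) (y : K) : tp.emb (x + x') y = tp.emb x y + tp.emb x' y :=
  tp.ext_inner_emb fun a b => by simp only [inner_add_left, inner_emb]; ring

theorem emb_smul_left (c : ℂ) (x : H) (y : K) : tp.emb (c • x) y = c • tp.emb x y :=
  tp.ext_inner_emb fun a b => by simp only [inner_smul_left, inner_emb]; ring

theorem emb_add_right (x : H) (y y' : K) : tp.emb x (y + y') = tp.emb x y + tp.emb x y' :=
  tp.ext_inner_emb fun a b => by simp only [inner_add_left, inner_emb]; ring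

theorem emb_smul_right (c : ℂ) (x : H) (y : K) : tp.emb x (c • y) = c • tp.emb x y :=
  tp.ext_inner_emb fun a b => by simp only [inner_smul_left, inner_emb]; ring

@[simp] theorem emb_zero_left (y : K) : tp.emb 0 y = 0 := by
  simpa using tp.emb_smul_left 0 0 y

open TensorProduct

noncomputable def tensorIsometry : H ⊗[ℂ] K →ₗᵢ[ℂ] HK :=
  (lift (LinearMap.mk₂ ℂ tp.emb tp.emb_add_left tp.emb_smul_left tp.emb_add_right
    tp.emb_smul_right)).isometryOfInner fun t s => by
    induction t using TensorProduct.induction_on with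
    | zero => simp
    | tmul x y =>
      induction s using TensorProduct.induction_on with
      | zero => simp
      | tmul x' y' => simp [tp.inner_emb]
      | add s s' hs hs' => simp_all [inner_add_right]
    | add t t' ht ht' => simp_all [inner_add_left]

@[simp] theorem tensorIsometry_tmul (x : H) (y : K) : tp.tensorIsometry (x ⊗ₜ y) = tp.emb x y :=
  rfl

theorem denseRange_tensorIsometry : DenseRange tp.tensorIsometry := by
  have : Submodule.span ℂ (Set.range fun p : H × K => tp.emb p.1 p.2) ≤
      LinearMap.range tp.tensorIsometry.toLinearMap :=
    Submodule.span_le.mpr (Set.range_subset_iff.mpr fun p => ⟨p.1 ⊗ₜ p.2, rfl⟩)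
  exact tp.dense_span.mono fun v hv => this hv

theorem norm_emb (x : H) (y : K) : ‖tp.emb x y‖ = ‖x‖ * ‖y‖ := by
  rw [← tensorIsometry_tmul, LinearIsometry.norm_map, norm_tmul]

section

variable [CompleteSpace HK]

noncomputable def rTensorL (P : H →L[ℂ] H) : HK →L[ℂ] HK :=
  (tp.tensorIsometry.toContinuousLinearMap ∘L P.rTensor K).extend
    tp.tensorIsometry.toContinuousLinearMap

theorem rTensorL_emb (P : H →L[ℂ] H) (x : H) (y : K) :
    tp.rTensorL P (tp.emb x y) = tp.emb (P x) y :=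
  ContinuousLinearMap.extend_eq _ tp.denseRange_tensorIsometry
    tp.tensorIsometry.isometry.isUniformInducing (x ⊗ₜ y)

variable [CompleteSpace H]

theorem adjoint_rTensorL (P : H →L[ℂ] H) :
    (tp.rTensorL P).adjoint = tp.rTensorL P.adjoint :=
  tp.ext_emb fun x y => tp.ext_inner_emb fun a b => by
    simp only [ContinuousLinearMap.adjoint_inner_left, rTensorL_emb, inner_emb]

noncomputable def rTensor : (H →L[ℂ] H) →⋆ₐ[ℂ] (HK →L[ℂ] HK) where
  toFun := tp.rTensorL
  map_one' := tp.ext_emb fun x y => by simp [rTensorL_emb]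
  map_mul' P Q := tp.ext_emb fun x y => by simp [rTensorL_emb]
  map_zero' := tp.ext_emb fun x y => by simp [rTensorL_emb]
  map_add' P Q := tp.ext_emb fun x y => by simp [rTensorL_emb, emb_add_left]
  commutes' c := tp.ext_emb fun x y => by
    simp [rTensorL_emb, Algebra.algebraMap_eq_smul_one, emb_smul_left]
  map_star' P := by simp only [ContinuousLinearMap.star_eq_adjoint, adjoint_rTensorL]

@[simp] theorem rTensor_emb (P : H →L[ℂ] H) (x : H) (y : K) :
    tp.rTensor P (tp.emb x y) = tp.emb (P x) y :=
  tp.rTensorL_emb P x y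

open ContinuousLinearMap in
theorem exists_norm_inner_rTensor_lt {A : H →L[ℂ] H} (hA : ¬IsUnit A) {C : HK →L[ℂ] HK}
    (hC : Commute C (tp.rTensor A)) {ε : ℝ} (hε : 0 < ε) :
    ∃ a : H, ‖a‖ = 1 ∧ ∀ b : K, ‖b‖ = 1 →
      ‖⟪C (tp.rTensor A (tp.emb a b)), tp.emb a b⟫_ℂ‖ < ε := by
  rcases A.exists_norm_apply_lt_or_exists_adjoint_apply_eq_zero hA with happrox | ⟨a, ha, hker⟩
  · obtain ⟨a, ha, hAa⟩ := happrox (ε / (‖C‖ + 1)) (by positivity)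
    refine ⟨a, ha, fun b hb => ?_⟩
    calc ‖⟪C (tp.rTensor A (tp.emb a b)), tp.emb a b⟫_ℂ‖
        ≤ ‖C (tp.emb (A a) b)‖ * ‖tp.emb a b‖ := by
          rw [rTensor_emb]
          exact norm_inner_le_norm _ _
      _ ≤ ‖C‖ * ‖A a‖ := by simpa [norm_emb, ha, hb] using C.le_opNorm (tp.emb (A a) b)
      _ ≤ (‖C‖ + 1) * ‖A a‖ := by gcongr; linarith
      _ < ε := (lt_div_iff₀' (by positivity)).mp hAa
  · refine ⟨a, ha, fun b _ => ?_⟩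
    have hadj : adjoint (tp.rTensor A) (tp.emb a b) = 0 := by
      rw [← star_eq_adjoint, ← map_star, star_eq_adjoint, rTensor_emb, hker, emb_zero_left]
    rw [← mul_apply_eq_comp, hC.eq, mul_apply_eq_comp, ← adjoint_inner_right, hadj,
      inner_zero_right, norm_zero]
    exact hε

end

/-- The same tensor product with the factors exchanged, so that `tp.swap.rTensor T` is `1 ⊗ T`. -/
def swap : TensorProdStructure K H HK where
  emb y x := tp.emb x y
  inner_emb y y' x x' := by rw [tp.inner_emb, mul_comm]
  dense_span := by
    convert tp.dense_span using 4
    exact Prod.swap_surjective.range_comp fun p : H × K => tp.emb p.1 p.2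

variable [CompleteSpace K] [CompleteSpace HK]

@[simp] theorem swap_rTensor_emb (Q : K →L[ℂ] K) (x : H) (y : K) :
    tp.swap.rTensor Q (tp.emb x y) = tp.emb x (Q y) :=
  tp.swap.rTensor_emb Q y x

variable [CompleteSpace H]

theorem commute_rTensor_swap_rTensor (P : H →L[ℂ] H) (Q : K →L[ℂ] K) :
    Commute (tp.rTensor P) (tp.swap.rTensor Q) :=
  tp.ext_emb fun x y => by simp

theorem eq_rTensor_mul_swap_rTensor {S : H →L[ℂ] H} {T : K →L[ℂ] K} {ST : HK →L[ℂ] HK}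
    (hST : ∀ x y, ST (tp.emb x y) = tp.emb (S x) (T y)) :
    ST = tp.rTensor S * tp.swap.rTensor T :=
  tp.ext_emb fun x y => by simp [hST]

theorem mul_mem_spectrum_rTensor_mul_swap_rTensor {S : H →L[ℂ] H} {T : K →L[ℂ] K} {η ζ : ℂ}
    (hη : η ∈ spectrum ℂ S) (hζ : ζ ∈ spectrum ℂ T) :
    η * ζ ∈ spectrum ℂ (tp.rTensor S * tp.swap.rTensor T) := by
  intro hunit
  obtain ⟨C₁, C₂, hC₁, hC₂, hid⟩ :=
    (tp.commute_rTensor_swap_rTensor S T).exists_mul_add_mul_eq_one hunit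
  have hS : algebraMap ℂ _ η - tp.rTensor S = tp.rTensor (algebraMap ℂ _ η - S) := by
    rw [map_sub, AlgHomClass.commutes]
  have hT : algebraMap ℂ _ ζ - tp.swap.rTensor T = tp.swap.rTensor (algebraMap ℂ _ ζ - T) := by
    rw [map_sub, AlgHomClass.commutes]
  simp only [hS, hT] at hid hC₁ hC₂
  obtain ⟨a, ha, hSa⟩ := tp.exists_norm_inner_rTensor_lt hη hC₁ one_half_pos
  obtain ⟨b, hb, hTb⟩ := tp.swap.exists_norm_inner_rTensor_lt hζ hC₂ one_half_pos
  set z := tp.emb a b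
  have hz : ⟪z, z⟫_ℂ = 1 := by
    rw [inner_self_eq_norm_sq_to_K, norm_emb, ha, hb]
    norm_num
  have := calc
    (1 : ℝ) = ‖⟪(C₁ * tp.rTensor (algebraMap ℂ _ η - S) +
        C₂ * tp.swap.rTensor (algebraMap ℂ _ ζ - T)) z, z⟫_ℂ‖ := by
      rw [hid, one_apply_eq_self, hz, norm_one]
    _ ≤ ‖⟪C₁ (tp.rTensor (algebraMap ℂ _ η - S) z), z⟫_ℂ‖ +
        ‖⟪C₂ (tp.swap.rTensor (algebraMap ℂ _ ζ - T) z), z⟫_ℂ‖ := by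
      rw [add_apply, mul_apply_eq_comp, mul_apply_eq_comp, inner_add_left]
      exact norm_add_le _ _
    _ < 1 / 2 + 1 / 2 := add_lt_add (hSa b hb) (hTb a ha)
  norm_num at this

end TensorProdStructure

/-- Brown–Pearcy: the spectrum of `S ⊗ T` on the Hilbert tensor product equals
the set of products `η ζ` with `η ∈ σ(S)`, `ζ ∈ σ(T)`. -/
theorem spectrum_tensor_product_eq_mul
    {H K HK : Type*}
    [NormedAddCommGroup H] [InnerProductSpace ℂ H] [CompleteSpace H]
    [NormedAddCommGroup K] [InnerProductSpace ℂ K] [CompleteSpace K]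
    [NormedAddCommGroup HK] [InnerProductSpace ℂ HK] [CompleteSpace HK]
    (tp : TensorProdStructure H K HK)
    (S : H →L[ℂ] H) (T : K →L[ℂ] K) (ST : HK →L[ℂ] HK)
    (hST : ∀ (x : H) (y : K), ST (tp.emb x y) = tp.emb (S x) (T y)) :
    spectrum ℂ ST = {z : ℂ | ∃ η ∈ spectrum ℂ S, ∃ ζ ∈ spectrum ℂ T, z = η * ζ} := by
  rw [tp.eq_rTensor_mul_swap_rTensor hST]
  refine subset_antisymm (fun z hz => ?_) ?_
  · obtain ⟨η, hη, ζ, hζ, rfl⟩ := spectrum_mul_subset_of_commute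
      (tp.commute_rTensor_swap_rTensor S T) hz
    exact ⟨η, AlgHom.spectrum_apply_subset _ _ hη, ζ, AlgHom.spectrum_apply_subset _ _ hζ, rfl⟩
  · rintro _ ⟨η, hη, ζ, hζ, rfl⟩
    exact tp.mul_mem_spectrum_rTensor_mul_swap_rTensor hη hζ
end

section
/- Let E be a real Banach space and Q₁, Q₂ ∈ L(E*, E) positive symmetric operators with reproducing kernel Hilbert spaces H_{Q₁}, H_{Q₂} continuously embedded in E. Then H_{Q₁} ⊆ H_{Q₂} as subsets of E if and only if there exists a constant K ≥ 0 such that ⟨Q₁ x*, x*⟩ ≤ K ⟨Q₂ x*, x*⟩ for all x* ∈ E*; in that case the inclusion map H_{Q₁} ↪ H_{Q₂} is continuous. -/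
/-!
The map `k` is the adjoint of the embedding `i`: `⟪k f, x⟫ = f (i x)` holds for `x = k g` by
construction, hence for all `x` by density, and `f (Q f) = ‖k f‖²`. Consequently `i₂` is
injective, its kernel being orthogonal to the dense range of `k₂`. So an inclusion of ranges
yields, by the closed graph theorem, a bounded `J` with `i₂ ∘ J = i₁`, and adjointness makes this
equivalent to `J† ∘ k₂ = k₁`. A bounded operator `T` with `T ∘ k₂ = k₁` exists exactly when
`‖k₁ f‖ ≤ c ‖k₂ f‖`, which is the domination of the quadratic forms with `K = c²`.
-/

open scoped InnerProductSpace

open Filter Topology in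
theorem ContinuousLinearMap.exists_comp_eq_of_range_subset
    {𝕜 E F G : Type*} [NontriviallyNormedField 𝕜]
    [NormedAddCommGroup E] [NormedSpace 𝕜 E]
    [NormedAddCommGroup F] [NormedSpace 𝕜 F] [CompleteSpace F]
    [NormedAddCommGroup G] [NormedSpace 𝕜 G] [CompleteSpace G]
    {i₁ : F →L[𝕜] E} {i₂ : G →L[𝕜] E} (hi₂ : Function.Injective i₂)
    (h : Set.range i₁ ⊆ Set.range i₂) :
    ∃ J : F →L[𝕜] G, i₂ ∘L J = i₁ := by
  let J : F →ₗ[𝕜] G := (LinearEquiv.ofInjective (i₂ : G →ₗ[𝕜] E) hi₂).symm.toLinearMap ∘ₗ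
    (i₁ : F →ₗ[𝕜] E).codRestrict _ fun x ↦ h ⟨x, rfl⟩
  have hJ (x : F) : i₂ (J x) = i₁ x :=
    LinearEquiv.ofInjective_symm_apply (h := hi₂) (f := (i₂ : G →ₗ[𝕜] E)) _
  have hJ_cont : Continuous J := J.continuous_of_seq_closed_graph fun u x y hu hJu ↦ by
    have h_lim : Tendsto (i₁ ∘ u) atTop (𝓝 (i₂ y)) := by
      simpa only [Function.comp_def, hJ] using (i₂.continuous.tendsto y).comp hJu
    exact hi₂ <| (tendsto_nhds_unique h_lim ((i₁.continuous.tendsto x).comp hu)).trans (hJ x).symm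
  exact ⟨⟨J, hJ_cont⟩, ContinuousLinearMap.ext hJ⟩

section DualAdjoint

variable {E H : Type*} [NormedAddCommGroup E] [NormedSpace ℝ E]
  [NormedAddCommGroup H] [InnerProductSpace ℝ H]
  {i : H →L[ℝ] E} {k : StrongDual ℝ E →ₗ[ℝ] H}

theorem inner_eq_apply_of_denseRange {Q : StrongDual ℝ E →L[ℝ] E}
    (hk : ∀ f g : StrongDual ℝ E, ⟪k f, k g⟫_ℝ = f (Q g)) (hik : ∀ f, i (k f) = Q f)
    (hdense : DenseRange k) (f : StrongDual ℝ E) (x : H) :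
    ⟪k f, x⟫_ℝ = f (i x) := by
  induction x using hdense.induction_on with
  | hp => exact isClosed_eq (by fun_prop) (by fun_prop)
  | ih g => rw [hk, hik]

theorem injective_of_inner_eq_apply (hki : ∀ f x, ⟪k f, x⟫_ℝ = f (i x)) (hdense : DenseRange k) :
    Function.Injective i := by
  refine (injective_iff_map_eq_zero i).2 fun x hx ↦ ?_
  have h_orth (y : H) : ⟪y, x⟫_ℝ = 0 := by
    induction y using hdense.induction_on with
    | hp => exact isClosed_eq (by fun_prop) continuous_const
    | ih f => rw [hki, hx, map_zero]
  exact inner_self_eq_zero.1 (h_orth x)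

end DualAdjoint

theorem exists_norm_le_mul_iff_exists_sq_le {α F G : Type*} [SeminormedAddCommGroup F]
    [SeminormedAddCommGroup G] (u : α → F) (w : α → G) :
    (∃ c, 0 ≤ c ∧ ∀ a, ‖u a‖ ≤ c * ‖w a‖) ↔ ∃ K, 0 ≤ K ∧ ∀ a, ‖u a‖ ^ 2 ≤ K * ‖w a‖ ^ 2 := by
  constructor
  · rintro ⟨c, hc, hle⟩
    refine ⟨c ^ 2, sq_nonneg c, fun a ↦ ?_⟩
    rw [← mul_pow]
    exact pow_le_pow_left₀ (norm_nonneg _) (hle a) 2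
  · rintro ⟨K, hK, hle⟩
    refine ⟨√K, Real.sqrt_nonneg K, fun a ↦ ?_⟩
    rw [← pow_le_pow_iff_left₀ (norm_nonneg _) (by positivity) two_ne_zero, mul_pow,
      Real.sq_sqrt hK]
    exact hle a

theorem LinearMap.exists_extend_iff_norm_le {𝕜 V F G : Type*} [NontriviallyNormedField 𝕜]
    [AddCommGroup V] [Module 𝕜 V]
    [NormedAddCommGroup F] [NormedSpace 𝕜 F] [CompleteSpace F]
    [NormedAddCommGroup G] [NormedSpace 𝕜 G]
    (u : V →ₗ[𝕜] F) {e : V →ₗ[𝕜] G} (he : DenseRange e) :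
    (∃ T : G →L[𝕜] F, ∀ v, T (e v) = u v) ↔ ∃ c, 0 ≤ c ∧ ∀ v, ‖u v‖ ≤ c * ‖e v‖ := by
  constructor
  · rintro ⟨T, hT⟩
    exact ⟨‖T‖, norm_nonneg T, fun v ↦ hT v ▸ T.le_opNorm (e v)⟩
  · rintro ⟨c, -, hle⟩
    exact ⟨u.extendOfNorm e, extendOfNorm_eq he ⟨c, hle⟩⟩

theorem comp_eq_iff_adjoint_apply_eq {E H₁ H₂ : Type*} [NormedAddCommGroup E] [NormedSpace ℝ E]
    [NormedAddCommGroup H₁] [InnerProductSpace ℝ H₁] [CompleteSpace H₁]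
    [NormedAddCommGroup H₂] [InnerProductSpace ℝ H₂] [CompleteSpace H₂]
    {i₁ : H₁ →L[ℝ] E} {i₂ : H₂ →L[ℝ] E} {k₁ : StrongDual ℝ E →ₗ[ℝ] H₁}
    {k₂ : StrongDual ℝ E →ₗ[ℝ] H₂}
    (hki₁ : ∀ f x, ⟪k₁ f, x⟫_ℝ = f (i₁ x)) (hki₂ : ∀ f x, ⟪k₂ f, x⟫_ℝ = f (i₂ x))
    (J : H₁ →L[ℝ] H₂) :
    i₂ ∘L J = i₁ ↔ ∀ f, J.adjoint (k₂ f) = k₁ f := by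
  constructor
  · rintro rfl f
    refine ext_inner_right ℝ fun x ↦ ?_
    rw [ContinuousLinearMap.adjoint_inner_left, hki₂, hki₁, ContinuousLinearMap.comp_apply]
  · intro h
    ext x
    refine (SeparatingDual.eq_iff_forall_dual_eq (R := ℝ)).2 fun f ↦ ?_
    rw [ContinuousLinearMap.comp_apply, ← hki₂, ← ContinuousLinearMap.adjoint_inner_left, h, hki₁]

theorem rkhs_subset_iff_quadratic_form_dominated_general
    {E H₁ H₂ : Type*}
    [NormedAddCommGroup E] [NormedSpace ℝ E]
    [NormedAddCommGroup H₁] [InnerProductSpace ℝ H₁] [CompleteSpace H₁]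
    [NormedAddCommGroup H₂] [InnerProductSpace ℝ H₂] [CompleteSpace H₂]
    (Q₁ Q₂ : StrongDual ℝ E →L[ℝ] E)
    (i₁ : H₁ →L[ℝ] E)
    (i₂ : H₂ →L[ℝ] E)
    (k₁ : StrongDual ℝ E →ₗ[ℝ] H₁)
    (hk₁ : ∀ f g : StrongDual ℝ E, ⟪k₁ f, k₁ g⟫_ℝ = f (Q₁ g))
    (hik₁ : ∀ f : StrongDual ℝ E, i₁ (k₁ f) = Q₁ f)
    (hdense₁ : Dense (LinearMap.range k₁ : Set H₁))
    (k₂ : StrongDual ℝ E →ₗ[ℝ] H₂)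
    (hk₂ : ∀ f g : StrongDual ℝ E, ⟪k₂ f, k₂ g⟫_ℝ = f (Q₂ g))
    (hik₂ : ∀ f : StrongDual ℝ E, i₂ (k₂ f) = Q₂ f)
    (hdense₂ : Dense (LinearMap.range k₂ : Set H₂)) :
    ((Set.range ⇑i₁ ⊆ Set.range ⇑i₂) ↔
        ∃ K : ℝ, 0 ≤ K ∧ ∀ f : StrongDual ℝ E, f (Q₁ f) ≤ K * f (Q₂ f)) ∧
    ((Set.range ⇑i₁ ⊆ Set.range ⇑i₂) →
        ∃ C : ℝ, ∀ (x : H₁) (y : H₂), i₂ y = i₁ x → ‖y‖ ≤ C * ‖x‖) := by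
  have hki₁ := inner_eq_apply_of_denseRange hk₁ hik₁ hdense₁
  have hki₂ := inner_eq_apply_of_denseRange hk₂ hik₂ hdense₂
  have hi₂ := injective_of_inner_eq_apply hki₂ hdense₂
  have hquad₁ (f : StrongDual ℝ E) : f (Q₁ f) = ‖k₁ f‖ ^ 2 := by
    rw [← hk₁, real_inner_self_eq_norm_sq]
  have hquad₂ (f : StrongDual ℝ E) : f (Q₂ f) = ‖k₂ f‖ ^ 2 := by
    rw [← hk₂, real_inner_self_eq_norm_sq]
  have hfactor : Set.range i₁ ⊆ Set.range i₂ ↔ ∃ J : H₁ →L[ℝ] H₂, i₂ ∘L J = i₁ := by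
    refine ⟨ContinuousLinearMap.exists_comp_eq_of_range_subset hi₂, ?_⟩
    rintro ⟨J, rfl⟩
    exact Set.range_comp_subset_range J i₂
  refine ⟨?_, fun h ↦ ?_⟩
  · simp only [hfactor, comp_eq_iff_adjoint_apply_eq hki₁ hki₂, hquad₁, hquad₂,
      ← exists_norm_le_mul_iff_exists_sq_le, ← k₁.exists_extend_iff_norm_le hdense₂]
    exact (ContinuousLinearMap.adjoint.surjective.exists
      (p := fun T : H₂ →L[ℝ] H₁ ↦ ∀ f, T (k₂ f) = k₁ f)).symm
  · obtain ⟨J, rfl⟩ := hfactor.1 h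
    exact ⟨‖J‖, fun x y hxy ↦ hi₂ hxy ▸ J.le_opNorm x⟩

/-- Comparison of reproducing kernel Hilbert spaces.  Let `Q₁, Q₂ : E* → E` be
positive symmetric operators on a real Banach space `E`, with reproducing kernel
Hilbert spaces `H₁, H₂` continuously embedded in `E` via injective maps `i₁, i₂`,
where the RKHS structure is encoded by maps `k₁ = i₁*, k₂ = i₂*` with dense range
satisfying `⟪kⱼ f, kⱼ g⟫ = f (Qⱼ g)` and `iⱼ (kⱼ f) = Qⱼ f`.  Then `H₁ ⊆ H₂` as
subsets of `E` iff `⟨Q₁ x*, x*⟩ ≤ K ⟨Q₂ x*, x*⟩` for some `K ≥ 0` and all `x*`;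
in that case the inclusion `H₁ ↪ H₂` is continuous. -/
theorem rkhs_subset_iff_quadratic_form_dominated
    {E H₁ H₂ : Type*}
    [NormedAddCommGroup E] [NormedSpace ℝ E]
    [NormedAddCommGroup H₁] [InnerProductSpace ℝ H₁] [CompleteSpace H₁]
    [NormedAddCommGroup H₂] [InnerProductSpace ℝ H₂] [CompleteSpace H₂]
    (Q₁ Q₂ : StrongDual ℝ E →L[ℝ] E)
    (hpos₁ : ∀ f : StrongDual ℝ E, 0 ≤ f (Q₁ f))
    (hsym₁ : ∀ f g : StrongDual ℝ E, f (Q₁ g) = g (Q₁ f))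
    (hpos₂ : ∀ f : StrongDual ℝ E, 0 ≤ f (Q₂ f))
    (hsym₂ : ∀ f g : StrongDual ℝ E, f (Q₂ g) = g (Q₂ f))
    (i₁ : H₁ →L[ℝ] E) (hi₁ : Function.Injective ⇑i₁)
    (i₂ : H₂ →L[ℝ] E) (hi₂ : Function.Injective ⇑i₂)
    (k₁ : StrongDual ℝ E →ₗ[ℝ] H₁)
    (hk₁ : ∀ f g : StrongDual ℝ E, ⟪k₁ f, k₁ g⟫_ℝ = f (Q₁ g))
    (hik₁ : ∀ f : StrongDual ℝ E, i₁ (k₁ f) = Q₁ f)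
    (hdense₁ : Dense (LinearMap.range k₁ : Set H₁))
    (k₂ : StrongDual ℝ E →ₗ[ℝ] H₂)
    (hk₂ : ∀ f g : StrongDual ℝ E, ⟪k₂ f, k₂ g⟫_ℝ = f (Q₂ g))
    (hik₂ : ∀ f : StrongDual ℝ E, i₂ (k₂ f) = Q₂ f)
    (hdense₂ : Dense (LinearMap.range k₂ : Set H₂)) :
    ((Set.range ⇑i₁ ⊆ Set.range ⇑i₂) ↔
        ∃ K : ℝ, 0 ≤ K ∧ ∀ f : StrongDual ℝ E, f (Q₁ f) ≤ K * f (Q₂ f)) ∧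
    ((Set.range ⇑i₁ ⊆ Set.range ⇑i₂) →
        ∃ C : ℝ, ∀ (x : H₁) (y : H₂), i₂ y = i₁ x → ‖y‖ ≤ C * ‖x‖) :=
  rkhs_subset_iff_quadratic_form_dominated_general Q₁ Q₂ i₁ i₂ k₁ hk₁ hik₁ hdense₁ k₂ hk₂ hik₂
    hdense₂
end
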